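/- For a measurable set A ⊆ ℝ^d and η ∼ N(0, σ²I), the map x ↦ P(x + η ∈ A) is Lipschitz after composing with Φ⁻¹: specifically, for any x, x′, Φ⁻¹(P(x+η ∈ A)) ≥ Φ⁻¹(P(x′+η ∈ A)) − ‖x−x′‖₂/σ, provided both probabilities lie in (0,1). -/

import Mathlib

/-!
Put `v = x - x'`, let `γ` be the law of `η` and `ν` the law of `η - v`. The density of `γ` with
respect to `ν` is `exp ((2 ⟪v, w⟫ + ‖v‖²) / 2σ²)`, an increasing function of `⟪v, w⟫`, so by the
Neyman–Pearson lemma a half-space `{⟪v, w⟫ ≤ c}` has the least `γ`-mass among all sets of at least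
its `ν`-mass. As `⟪v, η⟫ ∼ N(0, ‖v‖²σ²)`, the half-space of `ν`-mass `P(x' + η ∈ A) = Φ(β)` has
`γ`-mass `Φ(β - ‖v‖/σ)`, which thus bounds `P(x + η ∈ A)` from below.
-/

open MeasureTheory

/-- The standard Gaussian cumulative distribution function Φ. -/
noncomputable def stdGaussianCDF (t : ℝ) : ℝ :=
  ((ProbabilityTheory.gaussianReal 0 1) (Set.Iic t)).toReal

open ProbabilityTheory
open scoped ENNReal NNReal

theorem neyman_pearson_withDensity_le {α : Type*} [MeasurableSpace α] {ν : Measure α}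
    [IsFiniteMeasure ν] {f : α → ℝ≥0∞} {H B : Set α} (hH : MeasurableSet H)
    (hB : MeasurableSet B) {k : ℝ≥0∞} (hf_le : ∀ x ∈ H, f x ≤ k) (hf_ge : ∀ x ∉ H, k ≤ f x)
    (hν : ν H ≤ ν B) :
    ν.withDensity f H ≤ ν.withDensity f B := by
  have hdiff : ν (H \ B) ≤ ν (B \ H) := by
    rw [← measure_inter_add_sdiff H hB, ← measure_inter_add_sdiff B hH, Set.inter_comm] at hν
    exact (ENNReal.add_le_add_iff_left (measure_ne_top ν _)).mp hν
  have hHB : ν.withDensity f (H \ B) ≤ k * ν (H \ B) := by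
    rw [withDensity_apply _ (hH.diff hB), ← setLIntegral_const]
    exact setLIntegral_mono measurable_const fun x hx => hf_le x hx.1
  have hBH : k * ν (B \ H) ≤ ν.withDensity f (B \ H) := by
    rw [withDensity_apply _ (hB.diff hH), ← setLIntegral_const]
    exact lintegral_mono_ae <|
      (ae_restrict_iff' (hB.diff hH)).mpr (.of_forall fun x hx => hf_ge x hx.2)
  calc ν.withDensity f H = ν.withDensity f (H ∩ B) + ν.withDensity f (H \ B) :=
        (measure_inter_add_sdiff H hB).symm
    _ ≤ ν.withDensity f (B ∩ H) + k * ν (B \ H) := by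
        rw [Set.inter_comm]
        gcongr
        exact hHB.trans (by gcongr)
    _ ≤ ν.withDensity f (B ∩ H) + ν.withDensity f (B \ H) := by gcongr
    _ = ν.withDensity f B := measure_inter_add_sdiff B hH

theorem MeasureTheory.Measure.pi_withDensity_ofReal {ι : Type*} [Fintype ι] {α : ι → Type*}
    [∀ i, MeasurableSpace (α i)] (μ : ∀ i, Measure (α i)) [∀ i, IsProbabilityMeasure (μ i)]
    {f : ∀ i, α i → ℝ} (hf : ∀ i, Measurable (f i)) :
    Measure.pi (fun i => (μ i).withDensity fun y => ENNReal.ofReal (f i y)) =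
      (Measure.pi μ).withDensity fun x => ∏ i, ENNReal.ofReal (f i (x i)) := by
  refine Measure.pi_eq fun s hs => ?_
  have hg : ∀ i, Measurable ((s i).indicator fun y => ENNReal.ofReal (f i y)) :=
    fun i => (hf i).ennreal_ofReal.indicator (hs i)
  have hind : (Set.univ.pi s).indicator (fun x => ∏ i, ENNReal.ofReal (f i (x i))) =
      fun x => ∏ i, (s i).indicator (fun y => ENNReal.ofReal (f i y)) (x i) := by
    ext x
    classical simp [Set.indicator_apply, Finset.prod_ite_zero]
  rw [withDensity_apply _ (.univ_pi hs), ← lintegral_indicator (.univ_pi hs), hind,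
    lintegral_prod_eq_prod_lintegral_of_indepFun _ _ (iIndepFun_pi fun i => (hg i).aemeasurable)
      fun i => (hg i).comp (measurable_pi_apply i)]
  refine Finset.prod_congr rfl fun i _ => ?_
  rw [withDensity_apply _ (hs i), ← lintegral_indicator (hs i),
    ← (measurePreserving_eval μ i).lintegral_comp (hg i)]

theorem gaussianReal_withDensity_exp (m m' : ℝ) {v : ℝ≥0} (hv : v ≠ 0) :
    (gaussianReal m' v).withDensity
        (fun x => ENNReal.ofReal (Real.exp (((x - m') ^ 2 - (x - m) ^ 2) / (2 * v)))) =
      gaussianReal m v := by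
  rw [gaussianReal_of_var_ne_zero _ hv, gaussianReal_of_var_ne_zero _ hv, gaussianPDF_def,
    gaussianPDF_def, ← withDensity_mul _ (measurable_gaussianPDFReal _ _).ennreal_ofReal
      (by fun_prop)]
  congr 1
  ext x
  simp only [Pi.mul_apply, gaussianPDFReal]
  rw [← ENNReal.ofReal_mul (by positivity), mul_assoc, ← Real.exp_add]
  congr 3
  ring

theorem gaussianReal_Iic_toReal (m : ℝ) {v : ℝ≥0} (hv : v ≠ 0) (t : ℝ) :
    (gaussianReal m v (Set.Iic t)).toReal = stdGaussianCDF ((t - m) / Real.sqrt v) := by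
  have hsqrt : 0 < Real.sqrt v := Real.sqrt_pos.mpr (by positivity)
  have hstd : (gaussianReal m v).map (fun x => (x - m) / Real.sqrt v) = gaussianReal 0 1 := by
    have hcomp : (fun x => (x - m) / Real.sqrt v) = (· / Real.sqrt v) ∘ (· - m) := rfl
    rw [hcomp, ← Measure.map_map (by fun_prop) (by fun_prop), gaussianReal_map_sub_const,
      gaussianReal_map_div_const, sub_self, zero_div]
    congr
    ext
    simp [Real.sq_sqrt, hv]
  have hpre : (fun x => (x - m) / Real.sqrt v) ⁻¹' Set.Iic ((t - m) / Real.sqrt v) = Set.Iic t := by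
    ext x
    simp [div_le_div_iff_of_pos_right hsqrt]
  rw [stdGaussianCDF, ← hstd, Measure.map_apply (by fun_prop) measurableSet_Iic, hpre]

theorem stdGaussianCDF_strictMono : StrictMono stdGaussianCDF := by
  intro a b hab
  have hIoc : gaussianReal 0 1 (Set.Ioc a b) ≠ 0 := fun h =>
    (by simpa using gaussianReal_absolutelyContinuous' 0 one_ne_zero h : b ≤ a).not_gt hab
  rw [stdGaussianCDF, stdGaussianCDF, ← Set.Iic_union_Ioc_eq_Iic hab.le,
    measure_union (Set.Iic_disjoint_Ioc le_rfl) measurableSet_Ioc,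
    ENNReal.toReal_add (measure_ne_top _ _) (measure_ne_top _ _)]
  exact lt_add_of_pos_right _ (ENNReal.toReal_pos hIoc (measure_ne_top _ _))

theorem map_sum_pi_gaussianReal {ι : Type*} [Fintype ι] (m : ι → ℝ) (v : ι → ℝ≥0) :
    (Measure.pi fun i => gaussianReal (m i) (v i)).map (fun x => ∑ i, x i) =
      gaussianReal (∑ i, m i) (∑ i, v i) := by
  refine Measure.ext_of_charFun (funext fun t => ?_)
  rw [charFun_map_sum_pi_eq_prod, Finset.prod_apply]
  simp only [charFun_gaussianReal, ← Complex.exp_sum]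
  congr 1
  push_cast
  rw [Finset.mul_sum, Finset.sum_mul, Finset.sum_mul, Finset.sum_div, ← Finset.sum_sub_distrib]

theorem map_sum_mul_pi_gaussianReal {ι : Type*} [Fintype ι] (a m : ι → ℝ) (v : ℝ≥0) :
    (Measure.pi fun i => gaussianReal (m i) v).map (fun x => ∑ i, a i * x i) =
      gaussianReal (∑ i, a i * m i) ((∑ i, ‖a i‖₊ ^ 2) * v) := by
  have hcomp : (fun x : ι → ℝ => ∑ i, a i * x i) = (fun y => ∑ i, y i) ∘ fun x i => a i * x i := rfl
  rw [hcomp, ← Measure.map_map (by fun_prop) (by fun_prop),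
    Measure.pi_map_pi fun i => (measurable_const_mul (a i)).aemeasurable]
  simp only [gaussianReal_map_const_mul]
  rw [map_sum_pi_gaussianReal, Finset.sum_mul]
  congr 2
  ext i
  simp

theorem pi_gaussianReal_halfSpace_toReal {ι : Type*} [Fintype ι] {a : ι → ℝ} (ha : a ≠ 0)
    (m : ι → ℝ) {σ : ℝ≥0} (hσ : σ ≠ 0) (c : ℝ) :
    ((Measure.pi fun i => gaussianReal (m i) (σ ^ 2)) {x | ∑ i, a i * x i ≤ c}).toReal =
      stdGaussianCDF ((c - ∑ i, a i * m i) / (Real.sqrt (∑ i, a i ^ 2) * σ)) := by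
  have hpos : (∑ i, ‖a i‖₊ ^ 2) ≠ 0 := fun h => ha <| funext fun i => by
    simpa using Finset.sum_eq_zero_iff.mp h i (Finset.mem_univ i)
  have hhalf : {x : ι → ℝ | ∑ i, a i * x i ≤ c} = (fun x => ∑ i, a i * x i) ⁻¹' Set.Iic c := rfl
  rw [hhalf, ← Measure.map_apply (by fun_prop) measurableSet_Iic, map_sum_mul_pi_gaussianReal,
    gaussianReal_Iic_toReal _ (mul_ne_zero hpos (pow_ne_zero 2 hσ))]
  congr 2
  push_cast
  rw [Real.sqrt_mul (by positivity), Real.sqrt_sq σ.coe_nonneg]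
  simp

theorem pi_gaussianReal_eq_withDensity {ι : Type*} [Fintype ι] (v : ι → ℝ) {s : ℝ≥0}
    (hs : s ≠ 0) :
    Measure.pi (fun _ : ι => gaussianReal 0 s) =
      (Measure.pi fun i => gaussianReal (-v i) s).withDensity fun x =>
        ENNReal.ofReal (Real.exp ((2 * ∑ i, v i * x i + ∑ i, v i ^ 2) / (2 * s))) := by
  conv_lhs => enter [1, i]; rw [← gaussianReal_withDensity_exp 0 (-v i) hs]
  rw [Measure.pi_withDensity_ofReal _ fun i => by fun_prop]
  congr 1
  ext x
  rw [← ENNReal.ofReal_prod_of_nonneg fun i _ => (Real.exp_pos _).le, ← Real.exp_sum]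
  congr 2
  rw [← Finset.sum_div, Finset.mul_sum, ← Finset.sum_add_distrib]
  congr 1
  refine Finset.sum_congr rfl fun i _ => ?_
  ring

theorem pi_gaussianReal_map_sub {ι : Type*} [Fintype ι] (m v : ι → ℝ) (s : ℝ≥0) :
    (Measure.pi fun i => gaussianReal (m i) s).map (· - v) =
      Measure.pi fun i => gaussianReal (m i - v i) s := by
  rw [show (· - v) = fun (x : ι → ℝ) i => x i - v i from rfl,
    Measure.pi_map_pi (f := fun i y => y - v i) fun i => by fun_prop]
  simp_rw [gaussianReal_map_sub_const]

theorem pi_gaussianReal_halfSpace_le_of_le {ι : Type*} [Fintype ι] {s : ℝ≥0} (hs : s ≠ 0)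
    (v : ι → ℝ) (c : ℝ) {B : Set (ι → ℝ)} (hB : MeasurableSet B)
    (hνB : (Measure.pi fun i => gaussianReal (-v i) s) {x | ∑ i, v i * x i ≤ c} ≤
      (Measure.pi fun i => gaussianReal (-v i) s) B) :
    (Measure.pi fun _ : ι => gaussianReal 0 s) {x | ∑ i, v i * x i ≤ c} ≤
      (Measure.pi fun _ : ι => gaussianReal 0 s) B := by
  rw [pi_gaussianReal_eq_withDensity v hs]
  refine neyman_pearson_withDensity_le (measurableSet_le (by fun_prop) measurable_const) hB
    (k := ENNReal.ofReal (Real.exp ((2 * c + ∑ i, v i ^ 2) / (2 * s)))) ?_ ?_ hνB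
  · intro x hx
    gcongr
    exact hx
  · intro x hx
    gcongr
    exact (not_le.mp hx).le

theorem stdGaussianCDF_sub_le_pi_gaussianReal {ι : Type*} [Fintype ι] {σ : ℝ≥0} (hσ : σ ≠ 0)
    (v : ι → ℝ) {B : Set (ι → ℝ)} (hB : MeasurableSet B) {β : ℝ}
    (hβ : stdGaussianCDF β ≤
      ((Measure.pi fun _ : ι => gaussianReal 0 (σ ^ 2)) ((· - v) ⁻¹' B)).toReal) :
    stdGaussianCDF (β - Real.sqrt (∑ i, v i ^ 2) / σ) ≤
      ((Measure.pi fun _ : ι => gaussianReal 0 (σ ^ 2)) B).toReal := by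
  rcases eq_or_ne v 0 with rfl | hv
  · simpa using hβ
  set r := Real.sqrt (∑ i, v i ^ 2) with hr_def
  have hr : 0 < r := Real.sqrt_pos.mpr <| by
    obtain ⟨i, hi⟩ := Function.ne_iff.mp hv
    exact Finset.sum_pos' (fun j _ => sq_nonneg _) ⟨i, Finset.mem_univ _, pow_two_pos_of_ne_zero hi⟩
  have hr2 : ∑ i, v i ^ 2 = r ^ 2 := (Real.sq_sqrt (by positivity)).symm
  set c := σ * r * β - r ^ 2
  set H := {x : ι → ℝ | ∑ i, v i * x i ≤ c}
  have hνH : ((Measure.pi fun i => gaussianReal (-v i) (σ ^ 2)) H).toReal = stdGaussianCDF β := by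
    rw [pi_gaussianReal_halfSpace_toReal hv _ hσ, ← hr_def]
    congr 1
    simp only [mul_neg, Finset.sum_neg_distrib, ← sq, hr2]
    field_simp
    ring
  have hγH : ((Measure.pi fun _ : ι => gaussianReal 0 (σ ^ 2)) H).toReal =
      stdGaussianCDF (β - r / σ) := by
    rw [pi_gaussianReal_halfSpace_toReal hv _ hσ, ← hr_def]
    congr 1
    simp only [mul_zero, Finset.sum_const_zero, sub_zero]
    field_simp
    ring
  have hνB : (Measure.pi fun i => gaussianReal (-v i) (σ ^ 2)) B =
      (Measure.pi fun _ : ι => gaussianReal 0 (σ ^ 2)) ((· - v) ⁻¹' B) := by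
    rw [← Measure.map_apply (by fun_prop) hB, pi_gaussianReal_map_sub]
    simp_rw [zero_sub]
  have hNP := pi_gaussianReal_halfSpace_le_of_le (pow_ne_zero 2 hσ) v c hB <| by
    rw [← ENNReal.toReal_le_toReal (measure_ne_top _ _) (measure_ne_top _ _), hνH, hνB]
    exact hβ
  rw [← hγH]
  exact ENNReal.toReal_mono (measure_ne_top _ _) hNP

theorem gaussian_shift_inequality_general {d : ℕ} (Φinv : ℝ → ℝ)
    (hinv : ∀ p ∈ Set.Ioo (0 : ℝ) 1, stdGaussianCDF (Φinv p) = p)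
    (σ : NNReal) (hσ : 0 < σ)
    (A : Set (Fin d → ℝ)) (hA : MeasurableSet A)
    (x x' : Fin d → ℝ)
    (hx : ((Measure.pi fun _ : Fin d => ProbabilityTheory.gaussianReal 0 (σ ^ 2))
            {w | x + w ∈ A}).toReal ∈ Set.Ioo (0 : ℝ) 1)
    (hx' : ((Measure.pi fun _ : Fin d => ProbabilityTheory.gaussianReal 0 (σ ^ 2))
            {w | x' + w ∈ A}).toReal ∈ Set.Ioo (0 : ℝ) 1) :
    Φinv (((Measure.pi fun _ : Fin d => ProbabilityTheory.gaussianReal 0 (σ ^ 2))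
            {w | x + w ∈ A}).toReal) ≥
      Φinv (((Measure.pi fun _ : Fin d => ProbabilityTheory.gaussianReal 0 (σ ^ 2))
            {w | x' + w ∈ A}).toReal) -
        Real.sqrt (∑ i, (x i - x' i) ^ 2) / σ := by
  have hshift : (· - (x - x')) ⁻¹' {w | x + w ∈ A} = {w | x' + w ∈ A} := by
    ext w
    simp only [Set.mem_preimage, Set.mem_ofPred_eq, show x + (w - (x - x')) = x' + w by abel]
  have key := stdGaussianCDF_sub_le_pi_gaussianReal hσ.ne' (x - x')
    (B := {w | x + w ∈ A}) (hA.preimage (measurable_const_add x))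
    (β := Φinv ((Measure.pi fun _ : Fin d => gaussianReal 0 (σ ^ 2)) {w | x' + w ∈ A}).toReal)
    (by rw [hshift, hinv _ hx'])
  rw [← hinv _ hx] at key
  simpa using stdGaussianCDF_strictMono.le_iff_le.mp key

theorem gaussian_shift_inequality {d : ℕ} (Φinv : ℝ → ℝ)
    (hinv : ∀ p ∈ Set.Ioo (0 : ℝ) 1, stdGaussianCDF (Φinv p) = p)
    (hinv' : ∀ t : ℝ, Φinv (stdGaussianCDF t) = t)
    (σ : NNReal) (hσ : 0 < σ)
    (A : Set (Fin d → ℝ)) (hA : MeasurableSet A)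
    (x x' : Fin d → ℝ)
    (hx : ((Measure.pi fun _ : Fin d => ProbabilityTheory.gaussianReal 0 (σ ^ 2))
            {w | x + w ∈ A}).toReal ∈ Set.Ioo (0 : ℝ) 1)
    (hx' : ((Measure.pi fun _ : Fin d => ProbabilityTheory.gaussianReal 0 (σ ^ 2))
            {w | x' + w ∈ A}).toReal ∈ Set.Ioo (0 : ℝ) 1) :
    Φinv (((Measure.pi fun _ : Fin d => ProbabilityTheory.gaussianReal 0 (σ ^ 2))
            {w | x + w ∈ A}).toReal) ≥
      Φinv (((Measure.pi fun _ : Fin d => ProbabilityTheory.gaussianReal 0 (σ ^ 2))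
            {w | x' + w ∈ A}).toReal) -
        Real.sqrt (∑ i, (x i - x' i) ^ 2) / σ :=
  gaussian_shift_inequality_general Φinv hinv σ hσ A hA x x' hx hx'
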